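/- arXiv:2406.02119 — 3 statements merged into one kernel-verified Lean document; each statement's English description precedes it below -/
import Mathlib

section
/- Let 1 ≤ L ≤ M, let μ_1, ..., μ_L be pairwise distinct real numbers and t_1, ..., t_M be pairwise distinct real numbers. Then the L × M real matrix J with entries J(i, j) = exp(−μ_i · t_j) has rank L, i.e., its rows are linearly independent (equivalently, its columns span ℝ^L). -/
set_option autoImplicit false

/-!
An exponential sum `∑ i < n, c i * exp (μ i * y)` with distinct frequencies and not all
coefficients zero has at most `n - 1` real zeros. Induct on `n`: multiplying by `exp (-μ 0 * y)`
shifts the frequencies so that `μ 0 = 0` without moving the zeros; the derivative is then an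
exponential sum with `n - 1` distinct nonzero frequencies, and Rolle's theorem places a zero of it
strictly between any two consecutive zeros of the original sum. Applied to the first `L` columns,
this makes the rows of `J` linearly independent.
-/

open Real Finset Function

theorem exists_strictMono_deriv_eq_zero {n : ℕ} {f : ℝ → ℝ} (hf : Continuous f)
    {x : Fin (n + 1) → ℝ} (hx : StrictMono x) (hfx : ∀ k, f (x k) = 0) :
    ∃ ξ : Fin n → ℝ, StrictMono ξ ∧ ∀ k, deriv f (ξ k) = 0 := by
  have hgap : ∀ k : Fin n, ∃ z ∈ Set.Ioo (x k.castSucc) (x k.succ), deriv f z = 0 := fun k =>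
    exists_deriv_eq_zero (hx k.castSucc_lt_succ) hf.continuousOn (by rw [hfx, hfx])
  choose ξ hξ hξf using hgap
  refine ⟨ξ, fun k l hkl => ?_, hξf⟩
  calc ξ k < x k.succ := (hξ k).2
    _ ≤ x l.castSucc := hx.monotone (Fin.succ_le_castSucc_iff.mpr hkl)
    _ < ξ l := (hξ l).1

theorem hasDerivAt_sum_mul_exp {ι : Type*} (s : Finset ι) (c μ : ι → ℝ) (y : ℝ) :
    HasDerivAt (fun y => ∑ i ∈ s, c i * exp (μ i * y))
      (∑ i ∈ s, c i * μ i * exp (μ i * y)) y :=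
  HasDerivAt.fun_sum fun i _ =>
    (((hasDerivAt_id' y).const_mul (μ i)).exp.const_mul (c i)).congr_deriv (by ring)

theorem sum_mul_exp_sub_mul {ι : Type*} (s : Finset ι) (c μ : ι → ℝ) (a y : ℝ) :
    ∑ i ∈ s, c i * exp ((μ i - a) * y) = exp (-(a * y)) * ∑ i ∈ s, c i * exp (μ i * y) := by
  rw [mul_sum]
  refine sum_congr rfl fun i _ => ?_
  rw [sub_mul, sub_eq_neg_add, exp_add]
  ring

theorem eq_zero_of_sum_mul_exp_eq_zero_of_strictMono {n : ℕ} {μ c x : Fin n → ℝ}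
    (hμ : Injective μ) (hx : StrictMono x) (hc : ∀ k, ∑ i, c i * exp (μ i * x k) = 0) :
    c = 0 := by
  induction n with
  | zero => exact Subsingleton.elim _ _
  | succ n ih =>
    set g : ℝ → ℝ := fun y => ∑ i, c i * exp ((μ i - μ 0) * y)
    have hg : ∀ y, HasDerivAt g (∑ i, c i * (μ i - μ 0) * exp ((μ i - μ 0) * y)) y :=
      hasDerivAt_sum_mul_exp _ _ _
    have hgx : ∀ k, g (x k) = 0 := fun k => by
      simp only [g, sum_mul_exp_sub_mul, hc, mul_zero]
    obtain ⟨ξ, hξ, hgξ⟩ := exists_strictMono_deriv_eq_zero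
      (continuous_iff_continuousAt.mpr fun y => (hg y).continuousAt) hx hgx
    have hν : Injective fun i : Fin n => μ i.succ - μ 0 :=
      sub_left_injective.comp (hμ.comp (Fin.succ_injective n))
    have hcν := ih hν hξ fun k => by
      simpa [Fin.sum_univ_succ, (hg (ξ k)).deriv] using hgξ k
    have hsucc : ∀ i : Fin n, c i.succ = 0 := fun i =>
      (mul_eq_zero.mp (congrFun hcν i)).resolve_right
        (sub_ne_zero.mpr fun h => Fin.succ_ne_zero i (hμ h))
    have h0 : c 0 = 0 := by
      simpa [Fin.sum_univ_succ, hsucc, exp_ne_zero] using hc 0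
    ext i
    cases i using Fin.cases with
    | zero => exact h0
    | succ i => exact hsucc i

theorem eq_zero_of_sum_mul_exp_eq_zero {n : ℕ} {μ c x : Fin n → ℝ}
    (hμ : Injective μ) (hx : Injective x) (hc : ∀ k, ∑ i, c i * exp (μ i * x k) = 0) :
    c = 0 :=
  eq_zero_of_sum_mul_exp_eq_zero_of_strictMono hμ
    ((Tuple.monotone_sort x).strictMono_of_injective (hx.comp (Tuple.sort x).injective))
    fun _ => hc _

theorem linearIndependent_exp_mul {n m : ℕ} (hnm : n ≤ m) {μ : Fin n → ℝ} {t : Fin m → ℝ}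
    (hμ : Injective μ) (ht : Injective t) :
    LinearIndependent ℝ fun i j => exp (μ i * t j) := by
  refine Fintype.linearIndependent_iff.mpr fun c hc => congrFun ?_
  refine eq_zero_of_sum_mul_exp_eq_zero (x := t ∘ Fin.castLE hnm) hμ
    (ht.comp (Fin.castLE_injective hnm)) fun k => ?_
  simpa [Finset.sum_apply] using congrFun hc (Fin.castLE hnm k)

theorem exp_matrix_rank_eq_general (L M : ℕ) (hLM : L ≤ M) (μ : Fin L → ℝ)
    (t : Fin M → ℝ) (hμ : Function.Injective μ) (ht : Function.Injective t) :
    (Matrix.of fun (i : Fin L) (j : Fin M) => Real.exp (-μ i * t j)).rank = L := by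
  have hrows := linearIndependent_exp_mul (μ := fun i => -μ i) hLM (neg_injective.comp hμ) ht
  exact hrows.rank_matrix.trans (Fintype.card_fin L)

/-- The `L × M` matrix `J(i,j) = exp(−μ_i · t_j)` with `1 ≤ L ≤ M`, pairwise distinct `μ_i`
and pairwise distinct `t_j`, has full row rank `L`. -/
theorem exp_matrix_rank_eq (L M : ℕ) (hL : 1 ≤ L) (hLM : L ≤ M) (μ : Fin L → ℝ)
    (t : Fin M → ℝ) (hμ : Function.Injective μ) (ht : Function.Injective t) :
    (Matrix.of fun (i : Fin L) (j : Fin M) => Real.exp (-μ i * t j)).rank = L :=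
  exp_matrix_rank_eq_general L M hLM μ t hμ ht
end

section
/- (Lemma 2.2, inverse source problem.) Let N ≥ 1, 1 ≤ L ≤ M, let μ_1, ..., μ_L be pairwise distinct positive real numbers, let T > 0, and let 0 < t_1 < t_2 < ... < t_M. Let Φ be a real N × L matrix with linearly independent columns, let F = diag(f_1, ..., f_L) with every f_i ≠ 0, let D = diag(d_1, ..., d_L) with d_i = (1 − exp(−μ_i T)) / μ_i, and let J be the L × M matrix with entries J(i, j) = (1 − exp(−μ_i · t_j)) / μ_i. Set A = Φ F J and Ã = Φ D F J. Then the column space of A equals the column space of Ã, i.e., span{y_1, ..., y_M} = span{ỹ_1, ..., ỹ_M}, where y_j and ỹ_j denote the j-th columns of A and Ã respectively. -/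
/-!
The columns of `A = Φ F J` and `Ã = Φ D F J` both span the column space of `Φ`, because `F`, `D`
are invertible and `J` has full row rank. A relation `∑ vᵢ Jᵢⱼ = 0` between the rows of `J` says
that `g(x) = ∑ vᵢ (1 - e^{-μᵢ x}) / μᵢ` vanishes at `0 < t₁ < ⋯ < t_L`; by Rolle its derivative
`∑ vᵢ e^{-μᵢ x}` has `L` distinct zeros, and an exponential sum with `L` distinct frequencies
and `L` zeros vanishes identically (induction on `L`, again by Rolle after factoring out one
exponential).
-/

open Real Finset

theorem exists_strictMono_deriv_eq_zero_s5 {n : ℕ} {g : ℝ → ℝ} (hg : Continuous g)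
    {s : Fin (n + 1) → ℝ} (hs : StrictMono s) (hgs : ∀ k, g (s k) = 0) :
    ∃ z : Fin n → ℝ, StrictMono z ∧ ∀ k, deriv g (z k) = 0 := by
  have rolle : ∀ k : Fin n, ∃ c ∈ Set.Ioo (s k.castSucc) (s k.succ), deriv g c = 0 := fun k =>
    exists_deriv_eq_zero (hs k.castSucc_lt_succ) hg.continuousOn (by rw [hgs, hgs])
  choose z hz hz0 using rolle
  refine ⟨z, fun k l hkl => ?_, hz0⟩
  calc z k < s k.succ := (hz k).2
    _ ≤ s l.castSucc := hs.monotone (Fin.le_def.2 hkl)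
    _ < z l := (hz l).1

theorem hasDerivAt_sum_mul_exp_s5 {n : ℕ} (a c : Fin n → ℝ) (x : ℝ) :
    HasDerivAt (fun y => ∑ i, c i * exp (a i * y)) (∑ i, c i * a i * exp (a i * x)) x := by
  have h := HasDerivAt.fun_sum (u := univ) fun i _ =>
    (((hasDerivAt_id x).const_mul (a i)).exp).const_mul (c i)
  simpa only [id, mul_one, mul_comm (exp _), ← mul_assoc] using h

theorem eq_zero_of_sum_mul_exp_eq_zero_s5 {n : ℕ} {a : Fin n → ℝ} (ha : Function.Injective a)
    {c : Fin n → ℝ} {s : Fin n → ℝ} (hs : StrictMono s)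
    (hc : ∀ k, ∑ i, c i * exp (a i * s k) = 0) : c = 0 := by
  induction n with
  | zero => exact Subsingleton.elim _ _
  | succ n ih =>
    set b : Fin (n + 1) → ℝ := fun i => a i - a 0
    have hb0 : b 0 = 0 := sub_self _
    have hbsucc : ∀ i : Fin n, b i.succ ≠ 0 := fun i =>
      sub_ne_zero.2 (ha.ne (Fin.succ_ne_zero i))
    -- multiplying by `exp (-(a 0 * x))` keeps the zeros and kills the frequency of `c 0`
    have hgs : ∀ k, ∑ i, c i * exp (b i * s k) = 0 := fun k => by
      have : ∑ i, c i * exp (b i * s k) = exp (-(a 0 * s k)) * ∑ i, c i * exp (a i * s k) := by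
        rw [mul_sum]
        refine sum_congr rfl fun i _ => ?_
        rw [mul_left_comm, ← exp_add]
        congr 2
        ring
      rw [this, hc k, mul_zero]
    obtain ⟨z, hz, hz0⟩ := exists_strictMono_deriv_eq_zero_s5
      (Differentiable.continuous fun x =>
        (hasDerivAt_sum_mul_exp_s5 b c x).differentiableAt) hs hgs
    have hderiv : ∀ k, ∑ i : Fin n, c i.succ * b i.succ * exp (b i.succ * z k) = 0 := by
      intro k
      have h := hz0 k
      rw [(hasDerivAt_sum_mul_exp_s5 b c _).deriv, Fin.sum_univ_succ, hb0] at h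
      simpa using h
    have hcb := ih (a := fun i => b i.succ) (fun i j hij => Fin.succ_injective n
      (ha (sub_left_injective hij))) hz hderiv
    have hcsucc : ∀ i : Fin n, c i.succ = 0 := fun i =>
      (mul_eq_zero.1 (congr_fun hcb i)).resolve_right (hbsucc i)
    have hc0 : c 0 = 0 := by
      have h := hc 0
      simp only [Fin.sum_univ_succ, hcsucc, zero_mul, sum_const_zero, add_zero] at h
      exact (mul_eq_zero.1 h).resolve_right (exp_ne_zero _)
    funext i
    exact Fin.cases hc0 hcsucc i

theorem hasDerivAt_one_sub_exp_neg_mul_div {μ : ℝ} (hμ : μ ≠ 0) (x : ℝ) :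
    HasDerivAt (fun y => (1 - exp (-μ * y)) / μ) (exp (-μ * x)) x := by
  have h := (((hasDerivAt_id' x).const_mul (-μ)).exp.const_sub 1).div_const μ
  rwa [show -(exp (-μ * x) * (-μ * 1)) / μ = exp (-μ * x) by field_simp] at h

theorem linearIndependent_one_sub_exp_neg_mul_div {L M : ℕ} (hLM : L ≤ M) {μ : Fin L → ℝ}
    (hμ : Function.Injective μ) (hμ0 : ∀ i, μ i ≠ 0) {t : Fin M → ℝ} (ht : StrictMono t)
    (htpos : ∀ j, 0 < t j) :
    LinearIndependent ℝ fun i j => (1 - exp (-μ i * t j)) / μ i := by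
  rw [Fintype.linearIndependent_iff]
  intro v hv
  set g : ℝ → ℝ := fun x => ∑ i, v i * ((1 - exp (-μ i * x)) / μ i)
  have hg : ∀ x, HasDerivAt g (∑ i, v i * exp (-μ i * x)) x := fun x =>
    HasDerivAt.fun_sum fun i _ => (hasDerivAt_one_sub_exp_neg_mul_div (hμ0 i) x).const_mul (v i)
  set s : Fin (L + 1) → ℝ := Fin.cons 0 (t ∘ Fin.castLE hLM)
  have hs : StrictMono s :=
    Fin.strictMono_cons.2 ⟨fun j => htpos _, ht.comp (Fin.strictMono_castLE hLM)⟩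
  have hgs : ∀ k, g (s k) = 0 := by
    refine Fin.cases (by simp [g, s]) fun j => ?_
    simpa [g, s, Finset.sum_apply] using congr_fun hv (Fin.castLE hLM j)
  obtain ⟨z, hz, hz0⟩ := exists_strictMono_deriv_eq_zero_s5
    (Differentiable.continuous fun x => (hg x).differentiableAt) hs hgs
  have hzero := eq_zero_of_sum_mul_exp_eq_zero_s5 (a := fun i => -μ i)
    (neg_injective.comp hμ) hz fun k => (hg (z k)).deriv ▸ hz0 k
  exact congr_fun hzero

theorem Matrix.range_mulVecLin_mul_of_linearIndependent_row {K m n p : Type*} [Field K]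
    [Fintype m] [Fintype n] (A : Matrix p m K) {B : Matrix m n K}
    (hB : LinearIndependent K B.row) :
    LinearMap.range (A * B).mulVecLin = LinearMap.range A.mulVecLin := by
  rw [Matrix.mulVecLin_mul, LinearMap.range_comp_of_range_eq_top]
  apply Submodule.eq_top_of_finrank_eq
  rw [← Matrix.rank, hB.rank_matrix, Module.finrank_fintype_fun_eq_card]

theorem Matrix.linearIndependent_row_diagonal {K n : Type*} [Field K] [Fintype n]
    [DecidableEq n] {d : n → K} (hd : ∀ i, d i ≠ 0) :
    LinearIndependent K (Matrix.diagonal d).row :=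
  Matrix.linearIndependent_rows_of_isUnit
    (Matrix.isUnit_diagonal.2 (Pi.isUnit_iff.2 fun i => (hd i).isUnit))

theorem column_space_eq_inverse_source_general (N L M : ℕ) (hLM : L ≤ M)
    (μ : Fin L → ℝ) (hμ : Function.Injective μ) (hμpos : ∀ i, 0 < μ i)
    (T : ℝ) (hT : 0 < T) (t : Fin M → ℝ) (ht : StrictMono t) (htpos : ∀ j, 0 < t j)
    (Φ : Matrix (Fin N) (Fin L) ℝ)
    (f : Fin L → ℝ) (hf : ∀ i, f i ≠ 0)
    (J : Matrix (Fin L) (Fin M) ℝ) (hJ : ∀ i j, J i j = (1 - Real.exp (-μ i * t j)) / μ i)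
    (A Atil : Matrix (Fin N) (Fin M) ℝ)
    (hA : A = Φ * Matrix.diagonal f * J)
    (hAtil : Atil = Φ * Matrix.diagonal (fun i => (1 - Real.exp (-μ i * T)) / μ i) *
      Matrix.diagonal f * J) :
    Submodule.span ℝ (Set.range fun j : Fin M => fun i : Fin N => A i j) =
      Submodule.span ℝ (Set.range fun j : Fin M => fun i : Fin N => Atil i j) := by
  have hμ0 : ∀ i, μ i ≠ 0 := fun i => (hμpos i).ne'
  have hJrow : LinearIndependent ℝ J.row := by
    convert linearIndependent_one_sub_exp_neg_mul_div hLM hμ hμ0 ht htpos using 1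
    exact funext₂ hJ
  have hD : ∀ i, (1 - exp (-μ i * T)) / μ i ≠ 0 := fun i =>
    div_ne_zero (sub_ne_zero.2 (exp_lt_one_iff.2 (by nlinarith [hμpos i])).ne') (hμ0 i)
  have hFrow := Matrix.linearIndependent_row_diagonal hf
  have hDrow := Matrix.linearIndependent_row_diagonal hD
  change Submodule.span ℝ (Set.range A.col) = Submodule.span ℝ (Set.range Atil.col)
  simp only [← Matrix.range_mulVecLin, hA, hAtil,
    Matrix.range_mulVecLin_mul_of_linearIndependent_row _ hJrow,
    Matrix.range_mulVecLin_mul_of_linearIndependent_row _ hFrow,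
    Matrix.range_mulVecLin_mul_of_linearIndependent_row _ hDrow]

/-- Lemma 2.2 (inverse source problem): with `A = Φ F J` and `Ã = Φ D F J`, where
`D = diag((1 − exp(−μ_i T)) / μ_i)` and `J(i,j) = (1 − exp(−μ_i t_j)) / μ_i`,
the column spaces of `A` and `Ã` coincide. -/
theorem column_space_eq_inverse_source (N L M : ℕ) (hN : 1 ≤ N) (hL : 1 ≤ L) (hLM : L ≤ M)
    (μ : Fin L → ℝ) (hμ : Function.Injective μ) (hμpos : ∀ i, 0 < μ i)
    (T : ℝ) (hT : 0 < T) (t : Fin M → ℝ) (ht : StrictMono t) (htpos : ∀ j, 0 < t j)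
    (Φ : Matrix (Fin N) (Fin L) ℝ)
    (hΦ : LinearIndependent ℝ (fun j : Fin L => fun i : Fin N => Φ i j))
    (f : Fin L → ℝ) (hf : ∀ i, f i ≠ 0)
    (J : Matrix (Fin L) (Fin M) ℝ) (hJ : ∀ i j, J i j = (1 - Real.exp (-μ i * t j)) / μ i)
    (A Atil : Matrix (Fin N) (Fin M) ℝ)
    (hA : A = Φ * Matrix.diagonal f * J)
    (hAtil : Atil = Φ * Matrix.diagonal (fun i => (1 - Real.exp (-μ i * T)) / μ i) *
      Matrix.diagonal f * J) :
    Submodule.span ℝ (Set.range fun j : Fin M => fun i : Fin N => A i j) =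
      Submodule.span ℝ (Set.range fun j : Fin M => fun i : Fin N => Atil i j) :=
  column_space_eq_inverse_source_general N L M hLM μ hμ hμpos T hT t ht htpos Φ f hf J hJ A Atil hA
    hAtil
end

section
/- (Matrix form of Theorem 2.3.) Let N ≥ L ≥ 1, let T > 0 and 0 < μ_1 ≤ μ_2 ≤ ... ≤ μ_L. Let Φ be a real N × L matrix with orthonormal columns (Φᵀ Φ = I_L), let F be an invertible diagonal L × L matrix, let D = diag(d_1, ..., d_L) with d_i = (1 − exp(−μ_i T)) / μ_i, and let J be an invertible L × L real matrix. Set A = Φ F J and Ã = Φ D F J, with columns y_1, ..., y_L and ỹ_1, ..., ỹ_L respectively (viewed as vectors in Euclidean space ℝ^N). Let V be a linear subspace of ℝ^N and let P denote the orthogonal projection onto V. Then (Σ_{j=1}^{L} ‖y_j − P y_j‖²) · (Σ_{j=1}^{L} ‖ỹ_j‖²) ≤ L · ‖J‖₂² · ‖J⁻¹‖₂² · T² · μ_L² / (1 − exp(−μ_1 T))² · (Σ_{j=1}^{L} ‖ỹ_j − P ỹ_j‖²) · (Σ_{j=1}^{L} ‖y_j‖²). -/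
set_option autoImplicit false

open Matrix
open scoped Matrix.Norms.L2Operator

/-!
Since `J` is invertible and `D` is diagonal with positive entries, `A = Ã M` with
`M = J⁻¹ D⁻¹ J`, i.e. every `y_j` is the combination `∑ₖ M_kj ỹ_k`. The map `x ↦ x - P x` is
linear, so the same combination expresses the projection errors of the `y_j` through those of
the `ỹ_k`, and a column combination with coefficient matrix `M` inflates sums of squared norms
by at most `‖M‖₂² ≤ ‖J‖₂² ‖J⁻¹‖₂² max_k d_k⁻²`. Conversely `Φ` is an isometry, so
`‖ỹ_j‖ ≤ max_k d_k ‖y_j‖`. The bounds `d_k ≤ T` and `d_k⁻¹ ≤ μ_L / (1 - exp(-μ_1 T))` follow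
from `1 - x ≤ exp(-x)` and monotonicity of `μ`.
-/

theorem sum_norm_sq_sum_smul_le {ι κ n : Type*} [Fintype ι] [Fintype κ] [DecidableEq κ]
    [Fintype n] (M : Matrix ι κ ℝ) (v : ι → EuclideanSpace ℝ n) :
    ∑ j, ‖∑ i, M i j • v i‖ ^ 2 ≤ ‖M‖ ^ 2 * ∑ i, ‖v i‖ ^ 2 := by
  classical
  -- coordinatewise, the combination is `Mᴴ` applied to the slice `(v i r)ᵢ`
  let x : n → EuclideanSpace ℝ ι := fun r => WithLp.toLp 2 fun i => v i r
  have hcoord : ∀ j r, (∑ i, M i j • v i) r = (Mᴴ *ᵥ x r) j := by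
    intro j r
    simp [mulVec, dotProduct, x]
  calc ∑ j, ‖∑ i, M i j • v i‖ ^ 2
      = ∑ r, ‖(EuclideanSpace.equiv κ ℝ).symm (Mᴴ *ᵥ x r)‖ ^ 2 := by
        simp_rw [EuclideanSpace.real_norm_sq_eq, hcoord]
        exact Finset.sum_comm
    _ ≤ ∑ r, (‖M‖ * ‖x r‖) ^ 2 := by
        gcongr with r
        exact l2_opNorm_conjTranspose M ▸ l2_opNorm_mulVec Mᴴ (x r)
    _ = ‖M‖ ^ 2 * ∑ i, ‖v i‖ ^ 2 := by
        simp_rw [mul_pow, ← Finset.mul_sum, EuclideanSpace.real_norm_sq_eq]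
        exact congrArg _ Finset.sum_comm

theorem eq_sum_smul_of_apply_eq_mul_apply {ι κ n : Type*} [Fintype ι]
    (A : Matrix n ι ℝ) (M : Matrix ι κ ℝ) {y : κ → EuclideanSpace ℝ n}
    {z : ι → EuclideanSpace ℝ n} (hy : ∀ j r, y j r = (A * M) r j) (hz : ∀ i r, z i r = A r i)
    (j : κ) : y j = ∑ i, M i j • z i := by
  ext r
  simp [hy, hz, mul_apply, mul_comm]

theorem sum_sq_mul_apply_of_transpose_mul_self {m n p : Type*} [Fintype m] [Fintype n]
    [DecidableEq n] {Φ : Matrix m n ℝ} (hΦ : Φᵀ * Φ = 1) (B : Matrix n p ℝ) (j : p) :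
    ∑ r, (Φ * B) r j ^ 2 = ∑ k, B k j ^ 2 := by
  have h : (Φ * B)ᵀ * (Φ * B) = Bᵀ * B := by
    rw [transpose_mul, Matrix.mul_assoc, ← Matrix.mul_assoc Φᵀ, hΦ, Matrix.one_mul]
  simpa [mul_apply, sq, mul_comm] using congrFun (congrFun h j) j

theorem sum_sq_diagonal_mul_apply_le {n p : Type*} [Fintype n] [DecidableEq n] {d : n → ℝ}
    {c : ℝ} (hd : ∀ k, |d k| ≤ c) (B : Matrix n p ℝ) (j : p) :
    ∑ k, (diagonal d * B) k j ^ 2 ≤ c ^ 2 * ∑ k, B k j ^ 2 := by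
  simp only [diagonal_mul, mul_pow, Finset.mul_sum]
  refine Finset.sum_le_sum fun k _ => mul_le_mul_of_nonneg_right ?_ (sq_nonneg _)
  exact sq_le_sq' (abs_le.mp (hd k)).1 (abs_le.mp (hd k)).2

theorem mul_diagonal_mul_diagonal_mul_conj_inv {m n K : Type*} [Fintype n] [DecidableEq n]
    [Field K] (Φ : Matrix m n K) {d : n → K} (hd : ∀ i, d i ≠ 0) (f : n → K)
    {J : Matrix n n K} (hJ : IsUnit J) :
    Φ * diagonal d * diagonal f * J * (J⁻¹ * diagonal (fun i => (d i)⁻¹) * J) =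
      Φ * diagonal f * J := by
  have hJJ : J * J⁻¹ = 1 := mul_nonsing_inv J ((isUnit_iff_isUnit_det J).mp hJ)
  have hdiag : diagonal d * diagonal f * diagonal (fun i => (d i)⁻¹) = diagonal f := by
    simp only [diagonal_mul_diagonal]
    congr 1
    ext i
    field_simp [hd i]
  calc _ = Φ * (diagonal d * diagonal f * (J * J⁻¹) * diagonal (fun i => (d i)⁻¹)) * J := by
        simp only [Matrix.mul_assoc]
    _ = _ := by rw [hJJ, Matrix.mul_one, hdiag]

section DecayWeight

open Real

variable {μ T : ℝ}

theorem one_sub_exp_neg_mul_div_le (hμ : 0 < μ) : (1 - exp (-μ * T)) / μ ≤ T := by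
  rw [div_le_iff₀ hμ, neg_mul]
  linarith [one_sub_le_exp_neg (μ * T)]

theorem one_sub_exp_neg_mul_pos (hμ : 0 < μ) (hT : 0 < T) : 0 < 1 - exp (-μ * T) := by
  rw [sub_pos, exp_lt_one_iff, neg_mul, neg_lt_zero]
  positivity

theorem inv_one_sub_exp_neg_mul_div_le {μ₀ μ₁ : ℝ} (hT : 0 < T) (hμ₀ : 0 < μ₀) (h₀ : μ₀ ≤ μ)
    (h₁ : μ ≤ μ₁) : ((1 - exp (-μ * T)) / μ)⁻¹ ≤ μ₁ / (1 - exp (-μ₀ * T)) := by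
  rw [inv_div]
  refine div_le_div₀ (hμ₀.le.trans (h₀.trans h₁)) h₁ (one_sub_exp_neg_mul_pos hμ₀ hT) ?_
  gcongr

end DecayWeight

/-- Matrix form of Theorem 2.3 (inverse source problem): with
`D = diag((1 − exp(−μ_i T))/μ_i)`, `A = Φ F J`, `Ã = Φ D F J`, and `P` the orthogonal
projection onto a subspace `V ⊆ ℝ^N`:
`(Σ_j ‖y_j − P y_j‖²)(Σ_j ‖ỹ_j‖²) ≤ L ‖J‖₂² ‖J⁻¹‖₂² T² μ_L² / (1 − exp(−μ_1 T))²
  (Σ_j ‖ỹ_j − P ỹ_j‖²)(Σ_j ‖y_j‖²)`. -/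
theorem pod_projection_transfer_source (N L : ℕ) (hL : 1 ≤ L)
    (T : ℝ) (hT : 0 < T) (μ : Fin L → ℝ) (hμmono : Monotone μ)
    (hμpos : 0 < μ ⟨0, by omega⟩)
    (Φ : Matrix (Fin N) (Fin L) ℝ) (hΦ : Φᵀ * Φ = 1)
    (f : Fin L → ℝ)
    (J : Matrix (Fin L) (Fin L) ℝ) (hJ : IsUnit J)
    (A Atil : Matrix (Fin N) (Fin L) ℝ)
    (hA : A = Φ * Matrix.diagonal f * J)
    (hAtil : Atil = Φ * Matrix.diagonal (fun i => (1 - Real.exp (-μ i * T)) / μ i) *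
      Matrix.diagonal f * J)
    (y ytil : Fin L → EuclideanSpace ℝ (Fin N))
    (hy : ∀ j i, y j i = A i j) (hytil : ∀ j i, ytil j i = Atil i j)
    (V : Submodule ℝ (EuclideanSpace ℝ (Fin N))) :
    (∑ j, ‖y j - (Submodule.orthogonalProjection V (y j) : EuclideanSpace ℝ (Fin N))‖ ^ 2) *
        (∑ j, ‖ytil j‖ ^ 2) ≤
      (L : ℝ) * ‖Matrix.toEuclideanCLM (𝕜 := ℝ) J‖ ^ 2 *
        ‖Matrix.toEuclideanCLM (𝕜 := ℝ) J⁻¹‖ ^ 2 * T ^ 2 * (μ ⟨L - 1, by omega⟩) ^ 2 /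
        (1 - Real.exp (-μ ⟨0, by omega⟩ * T)) ^ 2 *
        (∑ j, ‖ytil j - (Submodule.orthogonalProjection V (ytil j) : EuclideanSpace ℝ (Fin N))‖ ^ 2) *
        (∑ j, ‖y j‖ ^ 2) := by
  set d : Fin L → ℝ := fun i => (1 - Real.exp (-μ i * T)) / μ i
  set c := μ ⟨L - 1, by omega⟩ / (1 - Real.exp (-μ ⟨0, by omega⟩ * T)) with hc
  have hμ₀ : ∀ k, μ ⟨0, by omega⟩ ≤ μ k := fun k => hμmono (Fin.le_def.mpr k.val.zero_le)
  have hμ_le : ∀ k, μ k ≤ μ ⟨L - 1, by omega⟩ := fun k =>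
    hμmono (Fin.le_def.mpr (Nat.le_sub_one_of_lt k.isLt))
  have hμ : ∀ k, 0 < μ k := fun k => hμpos.trans_le (hμ₀ k)
  have hd_pos : ∀ k, 0 < d k := fun k => div_pos (one_sub_exp_neg_mul_pos (hμ k) hT) (hμ k)
  have hd_abs : ∀ k, |d k| ≤ T := fun k =>
    (abs_of_pos (hd_pos k)).trans_le (one_sub_exp_neg_mul_div_le (hμ k))
  have hd_inv : ∀ k, |(d k)⁻¹| ≤ c := fun k => (abs_of_pos (inv_pos.mpr (hd_pos k))).trans_le
    (inv_one_sub_exp_neg_mul_div_le hT hμpos (hμ₀ k) (hμ_le k))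
  set M := J⁻¹ * diagonal (fun k => (d k)⁻¹) * J
  have hM : ‖M‖ ≤ ‖J⁻¹‖ * c * ‖J‖ := by
    grw [l2_opNorm_mul, l2_opNorm_mul, l2_opNorm_diagonal,
      pi_norm_le_iff_of_nonneg ((abs_nonneg _).trans (hd_inv ⟨0, by omega⟩)) |>.mpr hd_inv]
  have hcols : ∀ j, y j = ∑ k, M k j • ytil k :=
    eq_sum_smul_of_apply_eq_mul_apply Atil M (by
      rw [hAtil, mul_diagonal_mul_diagonal_mul_conj_inv Φ (fun k => (hd_pos k).ne') f hJ, ← hA]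
      exact hy) hytil
  have hS1 : ∑ j, ‖y j - V.starProjection (y j)‖ ^ 2 ≤
      ‖M‖ ^ 2 * ∑ k, ‖ytil k - V.starProjection (ytil k)‖ ^ 2 := by
    simp_rw [← Submodule.starProjection_orthogonal_val, hcols, map_sum, map_smul]
    exact sum_norm_sq_sum_smul_le M (fun k => Vᗮ.starProjection (ytil k))
  have hS2 : ∑ j, ‖ytil j‖ ^ 2 ≤ T ^ 2 * ∑ j, ‖y j‖ ^ 2 := by
    rw [Finset.mul_sum]
    refine Finset.sum_le_sum fun j _ => ?_
    simp only [EuclideanSpace.real_norm_sq_eq, hy, hytil, hA, hAtil, Matrix.mul_assoc,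
      sum_sq_mul_apply_of_transpose_mul_self hΦ]
    exact sum_sq_diagonal_mul_apply_le hd_abs _ j
  have hM_sq : ‖M‖ ^ 2 ≤ L * (‖J⁻¹‖ * c * ‖J‖) ^ 2 :=
    (pow_le_pow_left₀ (norm_nonneg M) hM 2).trans
      (le_mul_of_one_le_left (sq_nonneg _) (by exact_mod_cast hL))
  simp only [Submodule.coe_orthogonalProjectionOnto_apply, ← cstar_norm_def]
  calc _ ≤ (‖M‖ ^ 2 * _) * (T ^ 2 * _) := mul_le_mul hS1 hS2 (by positivity) (by positivity)
    _ ≤ (L * (‖J⁻¹‖ * c * ‖J‖) ^ 2 * _) * (T ^ 2 * _) := by gcongr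
    _ = _ := by rw [hc]; field_simp
end
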